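/- arXiv:2012.03766 — 3 statements merged into one kernel-verified Lean document; each statement's English description precedes it below -/
import Mathlib

section
/- Given two finite disjoint sets of items X and Y, each with total cost at most B, an additive valuation v, and a parameter k with every item having cost at most B/k^4, there exists a set Z ⊆ X ∪ Y with c(Z) ≤ B and v(Z) ≥ (1 − c(Y)/B − 1/k^4)·v(X) + v(Y). -/
/-!
Greedy knapsack: repeatedly discarding an item of least value density `v j / c j` from `X`
never lowers the value density of what remains, and the first time the remaining cost drops
to at most `b = B - c(Y)` it is still above `b - B/k⁴`, since every item costs at most `B/k⁴`.
The surviving part `T` of `X` therefore has `v(T) ≥ (b - B/k⁴)/B · v(X)`, and `Z = T ∪ Y` works.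
-/

open Finset

section Knapsack

variable {ι 𝕜 : Type*} [Field 𝕜] [LinearOrder 𝕜] [IsStrictOrderedRing 𝕜] (c v : ι → 𝕜)

theorem Finset.exists_mul_sum_le_mul_sum {S : Finset ι} (hS : S.Nonempty) :
    ∃ j ∈ S, v j * ∑ i ∈ S, c i ≤ c j * ∑ i ∈ S, v i :=
  exists_le_of_sum_le hS <| by
    rw [← sum_mul, ← sum_mul, mul_comm]

theorem Finset.mul_sum_erase_le_of_mul_le [DecidableEq ι] {S : Finset ι} {j : ι} (hj : j ∈ S)
    (hdensity : v j * ∑ i ∈ S, c i ≤ c j * ∑ i ∈ S, v i) :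
    (∑ i ∈ S, v i) * ∑ i ∈ S.erase j, c i ≤ (∑ i ∈ S.erase j, v i) * ∑ i ∈ S, c i := by
  rw [sum_erase_eq_sub hj, sum_erase_eq_sub hj]
  linarith

variable {c v}

theorem exists_subset_within_budget_of_budget_lt (hv : ∀ j, 0 ≤ v j) {b m : 𝕜}
    (hb : 0 ≤ b) (hmb : m ≤ b) (S : Finset ι) (hsmall : ∀ j ∈ S, c j ≤ m)
    (hbS : b < ∑ j ∈ S, c j) :
    ∃ T ⊆ S, ∑ j ∈ T, c j ≤ b ∧ (b - m) * ∑ j ∈ S, v j ≤ (∑ j ∈ S, c j) * ∑ j ∈ T, v j := by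
  classical
  induction S using Finset.strongInduction with
  | H S ih =>
  have hS : S.Nonempty := nonempty_of_sum_ne_zero (hb.trans_lt hbS).ne'
  obtain ⟨j, hj, hdensity⟩ := exists_mul_sum_le_mul_sum c v hS
  have hrest := mul_sum_erase_le_of_mul_le c v hj hdensity
  have hvS : 0 ≤ ∑ i ∈ S, v i := sum_nonneg fun i _ => hv i
  have hcS : ∑ i ∈ S.erase j, c i = ∑ i ∈ S, c i - c j := sum_erase_eq_sub hj
  by_cases hbS' : ∑ i ∈ S.erase j, c i ≤ b
  · refine ⟨S.erase j, erase_subset j S, hbS', ?_⟩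
    calc (b - m) * ∑ i ∈ S, v i ≤ (∑ i ∈ S, v i) * ∑ i ∈ S.erase j, c i := by
          rw [mul_comm, hcS]
          exact mul_le_mul_of_nonneg_left (by linarith [hsmall j hj]) hvS
      _ ≤ _ := by linarith
  · replace hbS' := not_le.1 hbS'
    obtain ⟨T, hT, hcT, hvT⟩ := ih (S.erase j) (erase_ssubset hj)
      (fun i hi => hsmall i (mem_of_mem_erase hi)) hbS'
    refine ⟨T, hT.trans (erase_subset j S), hcT, ?_⟩
    have hpos : 0 < ∑ i ∈ S.erase j, c i := hb.trans_lt hbS'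
    refine le_of_mul_le_mul_right ?_ hpos
    calc (b - m) * (∑ i ∈ S, v i) * ∑ i ∈ S.erase j, c i
        ≤ (b - m) * ((∑ i ∈ S.erase j, v i) * ∑ i ∈ S, c i) := by
          rw [mul_assoc]; exact mul_le_mul_of_nonneg_left hrest (sub_nonneg.2 hmb)
      _ = (b - m) * (∑ i ∈ S.erase j, v i) * ∑ i ∈ S, c i := by ring
      _ ≤ (∑ i ∈ S.erase j, c i) * (∑ i ∈ T, v i) * ∑ i ∈ S, c i :=
          mul_le_mul_of_nonneg_right hvT (hb.trans hbS.le)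
      _ = _ := by ring

theorem exists_subset_within_budget (hv : ∀ j, 0 ≤ v j) {b m C : 𝕜}
    (hb : 0 ≤ b) (hm : 0 ≤ m) (hbC : b ≤ C) (S : Finset ι) (hSC : ∑ j ∈ S, c j ≤ C)
    (hsmall : ∀ j ∈ S, c j ≤ m) :
    ∃ T ⊆ S, ∑ j ∈ T, c j ≤ b ∧ (b - m) * ∑ j ∈ S, v j ≤ C * ∑ j ∈ T, v j := by
  have hvS : 0 ≤ ∑ j ∈ S, v j := sum_nonneg fun j _ => hv j
  rcases lt_or_ge b m with hbm | hmb
  · refine ⟨∅, empty_subset S, by simpa using hb, ?_⟩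
    simpa using mul_nonpos_of_nonpos_of_nonneg (sub_nonpos.2 hbm.le) hvS
  rcases le_or_gt (∑ j ∈ S, c j) b with hSb | hbS
  · exact ⟨S, subset_refl S, hSb, mul_le_mul_of_nonneg_right (by linarith) hvS⟩
  obtain ⟨T, hT, hcT, hvT⟩ := exists_subset_within_budget_of_budget_lt hv hb hmb S hsmall hbS
  exact ⟨T, hT, hcT, hvT.trans (mul_le_mul_of_nonneg_right hSC (sum_nonneg fun j _ => hv j))⟩

end Knapsack

theorem exists_merged_budget_subset_general {ι : Type*} [DecidableEq ι]
    (X Y : Finset ι) (hXY : Disjoint X Y) (c v : ι → ℝ)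
    (hc : ∀ j, 0 ≤ c j) (hv : ∀ j, 0 ≤ v j)
    (B k : ℝ) (hB : 0 < B)
    (hcX : ∑ j ∈ X, c j ≤ B) (hcY : ∑ j ∈ Y, c j ≤ B)
    (hsmall : ∀ j ∈ X ∪ Y, c j ≤ B / k ^ 4) :
    ∃ Z ⊆ X ∪ Y, ∑ j ∈ Z, c j ≤ B ∧
      (1 - (∑ j ∈ Y, c j) / B - 1 / k ^ 4) * (∑ j ∈ X, v j) + ∑ j ∈ Y, v j ≤
        ∑ j ∈ Z, v j := by
  obtain ⟨T, hTX, hcT, hvT⟩ := exists_subset_within_budget hv (sub_nonneg.2 hcY)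
    (by positivity : 0 ≤ B / k ^ 4) (sub_le_self B (sum_nonneg fun j _ => hc j)) X hcX
    (fun j hj => hsmall j (mem_union_left Y hj))
  have hscale : B - ∑ j ∈ Y, c j - B / k ^ 4 = (1 - (∑ j ∈ Y, c j) / B - 1 / k ^ 4) * B := by
    field_simp
  rw [hscale, mul_right_comm, mul_comm B] at hvT
  have hdisj : Disjoint T Y := hXY.mono_left hTX
  refine ⟨T ∪ Y, union_subset_union hTX (subset_refl Y), ?_, ?_⟩
  · rw [sum_union hdisj]; linarith
  · rw [sum_union hdisj]; linarith [le_of_mul_le_mul_right hvT hB]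

/-- Given disjoint sets `X`, `Y` each of cost at most `B`, with every item of cost
at most `B/k⁴`, there is `Z ⊆ X ∪ Y` with `c(Z) ≤ B` and
`v(Z) ≥ (1 − c(Y)/B − 1/k⁴)·v(X) + v(Y)`. -/
theorem exists_merged_budget_subset {ι : Type*} [DecidableEq ι]
    (X Y : Finset ι) (hXY : Disjoint X Y) (c v : ι → ℝ)
    (hc : ∀ j, 0 ≤ c j) (hv : ∀ j, 0 ≤ v j)
    (B k : ℝ) (hB : 0 < B) (hk : 1 ≤ k)
    (hcX : ∑ j ∈ X, c j ≤ B) (hcY : ∑ j ∈ Y, c j ≤ B)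
    (hsmall : ∀ j ∈ X ∪ Y, c j ≤ B / k ^ 4) :
    ∃ Z ⊆ X ∪ Y, ∑ j ∈ Z, c j ≤ B ∧
      (1 - (∑ j ∈ Y, c j) / B - 1 / k ^ 4) * (∑ j ∈ X, v j) + ∑ j ∈ Y, v j ≤
        ∑ j ∈ Z, v j :=
  exists_merged_budget_subset_general X Y hXY c v hc hv B k hB hcX hcY hsmall
end

section
/- Any set T of items, each with value less than V/k^3 (where V is a fixed reference value) and each with cost at most B/k^4, can be partitioned into k (integral) sets Y'_1, ..., Y'_k such that each set satisfies v(Y'_i) ≤ v(T)/k + 4V/k^3 and c(Y'_i) ≤ c(T)/k + 4B/k^4. -/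
open Finset Function

/-! Sort the items by value and deal them out in rounds of `k`, one item to each part, the `k`
most valuable items in the first round. By induction on the remaining items, the parts built from
the later rounds differ in value by at most the largest value among them, which is at most the
smallest value of the first round; adding the first round then keeps the spread below the largest
value overall. Within a round the most expensive item goes to the currently cheapest part, which
keeps the cost spread below the largest cost. -/

section

variable {ι κ : Type*}

/-- Unlike `Finpartition`, parts may be empty. -/
def IsIndexedPartition [Fintype κ] [DecidableEq ι] (Y : κ → Finset ι) (T : Finset ι) : Prop :=
  Pairwise (Disjoint on Y) ∧ univ.biUnion Y = T

namespace IsIndexedPartition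

variable [Fintype κ] [DecidableEq ι] {Y : κ → Finset ι} {T : Finset ι}

lemma subset (hY : IsIndexedPartition Y T) (i : κ) : Y i ⊆ T :=
  hY.2 ▸ subset_biUnion_of_mem Y (mem_univ i)

lemma sum_sum {M : Type*} [AddCommMonoid M] (hY : IsIndexedPartition Y T) (w : ι → M) :
    ∑ i, ∑ j ∈ Y i, w j = ∑ j ∈ T, w j := by
  rw [← hY.2, sum_biUnion fun i _ i' _ h => hY.1 h]

lemma fiber [DecidableEq κ] (f : ι → κ) (T : Finset ι) :
    IsIndexedPartition (fun i => T.filter (f · = i)) T := by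
  refine ⟨fun i i' h => disjoint_filter.2 fun j _ hi hi' => h (hi ▸ hi'), ?_⟩
  ext j
  simp

lemma insert_equiv {H S : Finset ι} (hY : IsIndexedPartition Y S) (a : κ ≃ H)
    (hHS : Disjoint H S) : IsIndexedPartition (fun i => insert (a i : ι) (Y i)) (H ∪ S) := by
  have hnot (i i' : κ) : (a i : ι) ∉ Y i' :=
    fun h => disjoint_left.1 hHS (a i).2 (hY.subset i' h)
  refine ⟨fun i i' h => ?_, ?_⟩
  · simp only [Function.onFun, disjoint_insert_left, disjoint_insert_right, mem_insert, not_or]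
    exact ⟨⟨fun h' => h (a.injective (Subtype.ext h'.symm)), hnot i' i⟩, hnot i i', hY.1 h⟩
  · ext j
    simp only [mem_biUnion, mem_univ, true_and, mem_insert, mem_union, ← hY.2]
    constructor
    · rintro ⟨i, rfl | hj⟩
      exacts [Or.inl (a i).2, Or.inr ⟨i, hj⟩]
    · rintro (hj | ⟨i, hj⟩)
      exacts [⟨a.symm ⟨j, hj⟩, Or.inl (by simp)⟩, ⟨i, Or.inr hj⟩]

end IsIndexedPartition

lemma le_sum_div_card_add_of_forall_le_add [Fintype κ] {a : κ → ℝ} {d : ℝ}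
    (h : ∀ i i', a i ≤ a i' + d) (i : κ) : a i ≤ (∑ i', a i') / Fintype.card κ + d := by
  have hcard : (0 : ℝ) < Fintype.card κ := by exact_mod_cast Fintype.card_pos_iff.2 ⟨i⟩
  have hsum : ∑ _i' : κ, a i ≤ ∑ i', (a i' + d) := sum_le_sum fun i' _ => h i i'
  simp only [sum_const, card_univ, nsmul_eq_mul, sum_add_distrib] at hsum
  rw [div_add' _ _ _ hcard.ne', le_div_iff₀ hcard]
  linarith

lemma sum_le_of_card_le_one {s : Finset ι} {w : ι → ℝ} {M : ℝ} (hs : #s ≤ 1) (hM : 0 ≤ M)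
    (hw : ∀ j ∈ s, w j ≤ M) : ∑ j ∈ s, w j ≤ M :=
  calc ∑ j ∈ s, w j ≤ #s • M := sum_le_card_nsmul s w M hw
    _ ≤ 1 • M := nsmul_le_nsmul_left hM hs
    _ = M := one_nsmul M

lemma Finset.exists_subset_card_eq_forall_sdiff_le {α : Type*} [LinearOrder α] [DecidableEq ι]
    (f : ι → α) (n : ℕ) (T : Finset ι) (hn : n ≤ #T) :
    ∃ H ⊆ T, #H = n ∧ ∀ a ∈ H, ∀ b ∈ T \ H, f b ≤ f a := by
  induction n generalizing T with
  | zero => exact ⟨∅, empty_subset T, card_empty, by simp⟩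
  | succ n ih =>
    obtain ⟨m, hmT, hmax⟩ := T.exists_max_image f (card_pos.1 (by omega))
    obtain ⟨H, hHT, hcard, hH⟩ := ih (T.erase m) (by rw [card_erase_of_mem hmT]; omega)
    have hmH : m ∉ H := fun h => by simpa using hHT h
    refine ⟨insert m H, insert_subset hmT (hHT.trans (erase_subset m T)), ?_, ?_⟩
    · rw [card_insert_of_notMem hmH, hcard]
    · intro a ha b hb
      simp only [mem_sdiff, mem_insert, not_or] at hb
      obtain rfl | ha := mem_insert.1 ha
      · exact hmax b hb.1
      · exact hH a ha b (by simp [hb])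

lemma exists_perm_antivary_comp {n : ℕ} {α β : Type*} [LinearOrder α] [LinearOrder β]
    (f : Fin n → α) (g : Fin n → β) : ∃ σ : Equiv.Perm (Fin n), Antivary (f ∘ σ) g := by
  refine ⟨(Tuple.sort g).symm.trans (Fin.revPerm.trans (Tuple.sort f)), fun i j hij => ?_⟩
  have hlt : (Tuple.sort g).symm i < (Tuple.sort g).symm j :=
    (Tuple.monotone_sort g).reflect_lt (by simpa using hij)
  exact Tuple.monotone_sort f (Fin.rev_le_rev.2 hlt.le)

lemma Antivary.add_le_add_add_of_forall_le_add {L y : κ → ℝ} {C : ℝ} (hy : Antivary y L)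
    (hL : ∀ i i', L i ≤ L i' + C) (hy0 : ∀ i, 0 ≤ y i) (hyC : ∀ i, y i ≤ C) (i i' : κ) :
    L i + y i ≤ L i' + y i' + C := by
  rcases le_or_gt (L i) (L i') with h | h
  · linarith [hyC i, hy0 i']
  · linarith [hy h, hL i i']

lemma exists_partition_card_le_one [Fintype κ] [DecidableEq κ] [Nonempty κ] [DecidableEq ι]
    {T : Finset ι} (hT : #T ≤ Fintype.card κ) :
    ∃ Y : κ → Finset ι, IsIndexedPartition Y T ∧ ∀ i, #(Y i) ≤ 1 := by
  obtain ⟨e⟩ := Function.Embedding.nonempty_of_card_le (α := T) (β := κ) (by simpa using hT)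
  let f : ι → κ := fun j => if h : j ∈ T then e ⟨j, h⟩ else Classical.arbitrary κ
  refine ⟨_, IsIndexedPartition.fiber f T, fun i => card_le_one.2 fun a ha b hb => ?_⟩
  simp only [mem_filter] at ha hb
  have hab : e ⟨a, ha.1⟩ = e ⟨b, hb.1⟩ := by simpa [f, ha.1, hb.1] using ha.2.trans hb.2.symm
  simpa using e.injective hab

theorem exists_balanced_partition [DecidableEq ι] {k : ℕ} (hk : 0 < k) {c v : ι → ℝ}
    (hc : ∀ j, 0 ≤ c j) (hv : ∀ j, 0 ≤ v j) {C : ℝ} (hC : 0 ≤ C) (T : Finset ι)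
    (hcC : ∀ j ∈ T, c j ≤ C) {M : ℝ} (hM : 0 ≤ M) (hvM : ∀ j ∈ T, v j ≤ M) :
    ∃ Y : Fin k → Finset ι, IsIndexedPartition Y T ∧
      (∀ i i', ∑ j ∈ Y i, v j ≤ ∑ j ∈ Y i', v j + M) ∧
      (∀ i i', ∑ j ∈ Y i, c j ≤ ∑ j ∈ Y i', c j + C) := by
  induction T using Finset.strongInduction generalizing M with
  | H T ih =>
  by_cases hT : #T ≤ k
  · have : Nonempty (Fin k) := Fin.pos_iff_nonempty.1 hk
    obtain ⟨Y, hY, hcard⟩ := exists_partition_card_le_one (κ := Fin k) (by simpa using hT)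
    have hspread (w : ι → ℝ) (hw : ∀ j, 0 ≤ w j) {D : ℝ} (hD : 0 ≤ D) (hwD : ∀ j ∈ T, w j ≤ D)
        (i i' : Fin k) : ∑ j ∈ Y i, w j ≤ ∑ j ∈ Y i', w j + D := by
      have := sum_le_of_card_le_one (hcard i) hD fun j hj => hwD j (hY.subset i hj)
      have := sum_nonneg fun j (_ : j ∈ Y i') => hw j
      linarith
    exact ⟨Y, hY, hspread v hv hM hvM, hspread c hc hC hcC⟩
  · obtain ⟨H, hHT, hHcard, hHtop⟩ := exists_subset_card_eq_forall_sdiff_le v k T (by omega)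
    obtain ⟨m, hmH, hmmin⟩ := H.exists_min_image v (card_pos.1 (hHcard ▸ hk))
    obtain ⟨Y, hY, hvY, hcY⟩ := ih (T \ H) (sdiff_ssubset hHT ⟨m, hmH⟩)
      (fun j hj => hcC j (mem_sdiff.1 hj).1) (hv m) (hHtop m hmH)
    let e : Fin k ≃ H := (Fintype.equivFinOfCardEq (by simpa using hHcard)).symm
    obtain ⟨σ, hσ⟩ := exists_perm_antivary_comp (fun r => c (e r)) (fun i => ∑ j ∈ Y i, c j)
    let a := σ.trans e
    have hsum (w : ι → ℝ) (i : Fin k) :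
        ∑ j ∈ insert (a i : ι) (Y i), w j = ∑ j ∈ Y i, w j + w (a i) := by
      rw [sum_insert fun h => (mem_sdiff.1 (hY.subset i h)).2 (a i).2, add_comm]
    refine ⟨fun i => insert (a i : ι) (Y i),
      union_sdiff_of_subset hHT ▸ hY.insert_equiv a disjoint_sdiff, fun i i' => ?_, fun i i' => ?_⟩
    · rw [hsum, hsum]
      linarith [hvY i i', hvM _ (hHT (a i).2), hmmin _ (a i').2]
    · rw [hsum, hsum]
      exact hσ.add_le_add_add_of_forall_le_add hcY (fun _ => hc _)
        (fun i => hcC _ (hHT (a i).2)) i i'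

end

/-- A set `T` of items whose values are all below `V/k³` and whose costs are all at
most `B/k⁴` can be partitioned into `k` sets, each of value at most
`v(T)/k + 4V/k³` and cost at most `c(T)/k + 4B/k⁴`. -/
theorem light_items_balanced_partition {ι : Type*} [DecidableEq ι]
    (T : Finset ι) (c v : ι → ℝ)
    (hc : ∀ j, 0 ≤ c j) (hv : ∀ j, 0 ≤ v j)
    (k : ℕ) (hk : 0 < k) (V B : ℝ) (hV : 0 < V) (hB : ∑ j ∈ T, c j ≤ B)
    (hlight : ∀ j ∈ T, v j < V / (k : ℝ) ^ 3)
    (hsmall : ∀ j ∈ T, c j ≤ B / (k : ℝ) ^ 4) :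
    ∃ Y : Fin k → Finset ι,
      (∀ i, Y i ⊆ T) ∧
      (∀ i i', i ≠ i' → Disjoint (Y i) (Y i')) ∧
      Finset.univ.biUnion Y = T ∧
      (∀ i, ∑ j ∈ Y i, v j ≤ (∑ j ∈ T, v j) / k + 4 * V / (k : ℝ) ^ 3) ∧
      (∀ i, ∑ j ∈ Y i, c j ≤ (∑ j ∈ T, c j) / k + 4 * B / (k : ℝ) ^ 4) := by
  have hB0 : 0 ≤ B := (sum_nonneg fun j _ => hc j).trans hB
  obtain ⟨Y, hY, hvY, hcY⟩ := exists_balanced_partition hk hc hv (by positivity) T hsmall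
    (by positivity) fun j hj => (hlight j hj).le
  have hbound (w : ι → ℝ) {D : ℝ} (hD : 0 ≤ D) (hw : ∀ i i', ∑ j ∈ Y i, w j ≤ ∑ j ∈ Y i', w j + D)
      (i : Fin k) : ∑ j ∈ Y i, w j ≤ (∑ j ∈ T, w j) / k + 4 * D := by
    have := le_sum_div_card_add_of_forall_le_add hw i
    rw [hY.sum_sum, Fintype.card_fin] at this
    linarith
  refine ⟨Y, hY.subset, fun i i' h => hY.1 h, hY.2, fun i => ?_, fun i => ?_⟩
  · simpa only [mul_div_assoc] using hbound v (by positivity) hvY i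
  · simpa only [mul_div_assoc] using hbound c (by positivity) hcY i
end

section
/- For any finite set T of items with additive values and costs, and any integer k ≥ 1, T admits a fractional partition into k parts Y_1, ..., Y_k of equal total cost c(T)/k and equal total value v(T)/k, such that each part contains at most 4 fractionally-assigned items (all other items are assigned entirely to one part). -/
open Finset

/-!
Sort the items by decreasing density `v / c` and lay them end to end, item `j` occupying
`[P j, P (j + 1)]` in `[0, C]`, `C = c(T)`. The value of `[0, x]` is then a continuous concave
function `F` of `x`. Let `p = C / k`. Part `i` is `[s i, s (i + 1)] ∪ [t (i + 1), t i]`, cut off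
from both ends of the remaining interval `[s i, t i]` of length `(k - i) p`: sliding a window
of total length `p` from the right end to the left end, concavity says its value passes from at
most to at least the average, so by the intermediate value theorem some position has value exactly
`v(T) / k`. Each of the four endpoints of a part lies strictly inside at most one item, so at most
four items are split.
-/

section Cuts

variable {F : ℝ → ℝ} {a b p q : ℝ}

theorem ConcaveOn.mul_sub_le_sub (hF : ConcaveOn ℝ (Set.Icc a b) F) (hab : a ≤ b) {θ : ℝ}
    (hθ₀ : 0 ≤ θ) (hθ₁ : θ ≤ 1) : θ * (F b - F a) ≤ F (a + θ * (b - a)) - F a := by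
  have h := hF.2 (Set.left_mem_Icc.2 hab) (Set.right_mem_Icc.2 hab) (sub_nonneg.2 hθ₁) hθ₀
    (sub_add_cancel 1 θ)
  simp only [smul_eq_mul] at h
  rw [show (1 - θ) * a + θ * b = a + θ * (b - a) by ring] at h
  linarith

theorem ConcaveOn.exists_two_sided_cut {m : ℕ} (hF : ConcaveOn ℝ (Set.Icc a b) F)
    (hFc : ContinuousOn F (Set.Icc a b)) (hp : 0 ≤ p) (hab : b - a = (m + 1) * p)
    (hFab : F b - F a = (m + 1) * q) :
    ∃ s ∈ Set.Icc a (a + p), (F s - F a) + (F b - F (s + m * p)) = q := by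
  have hm : (0 : ℝ) < m + 1 := by positivity
  have hmp : 0 ≤ (m : ℝ) * p := by positivity
  have hab' : a ≤ b := by nlinarith
  have h_first : q ≤ F (a + p) - F a := by
    have h := hF.mul_sub_le_sub hab' (θ := 1 / (m + 1)) (by positivity)
      ((div_le_one hm).2 (by linarith [m.cast_nonneg (α := ℝ)]))
    rw [hFab, hab] at h
    field_simp at h
    exact h
  have h_last : F b - F (a + m * p) ≤ q := by
    have h := hF.mul_sub_le_sub hab' (θ := m / (m + 1)) (by positivity)
      ((div_le_one hm).2 (by linarith))
    rw [hFab, hab] at h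
    field_simp at h
    linarith
  have hcont : ContinuousOn (fun s => (F s - F a) + (F b - F (s + m * p)))
      (Set.Icc a (a + p)) := by
    have h₁ : Set.MapsTo id (Set.Icc a (a + p)) (Set.Icc a b) :=
      fun s hs => ⟨hs.1, by simp only [id]; linarith [hs.2]⟩
    have h₂ : Set.MapsTo (· + m * p) (Set.Icc a (a + p)) (Set.Icc a b) :=
      fun s hs => ⟨by linarith [hs.1], by linarith [hs.2]⟩
    exact ((hFc.comp continuousOn_id h₁).sub continuousOn_const).add
      (continuousOn_const.sub (hFc.comp (continuousOn_id.add continuousOn_const) h₂))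
  have hq : q ∈ Set.Icc (F a - F a + (F b - F (a + m * p)))
      ((F (a + p) - F a) + (F b - F (a + p + m * p))) := by
    rw [show a + p + m * p = b by linarith]
    constructor <;> linarith
  exact intermediate_value_Icc (by linarith) hcont hq

theorem ConcaveOn.exists_nested_cuts {a b : ℝ} (hF : ConcaveOn ℝ (Set.Icc a b) F)
    (hFc : ContinuousOn F (Set.Icc a b)) (hp : 0 ≤ p) (m : ℕ) (hab : b - a = m * p)
    (hFab : F b - F a = m * q) :
    ∃ s t : ℕ → ℝ, s 0 = a ∧ t 0 = b ∧ s m = t m ∧ ∀ i < m,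
      a ≤ s i ∧ s i ≤ s (i + 1) ∧ s (i + 1) ≤ t (i + 1) ∧ t (i + 1) ≤ t i ∧ t i ≤ b ∧
      (s (i + 1) - s i) + (t i - t (i + 1)) = p ∧
      (F (s (i + 1)) - F (s i)) + (F (t i) - F (t (i + 1))) = q := by
  induction m generalizing a b with
  | zero =>
    have hba : b = a := by simpa [sub_eq_zero] using hab
    exact ⟨fun _ => a, fun _ => a, rfl, hba.symm, rfl, by simp⟩
  | succ m ih =>
    push_cast at hab hFab
    obtain ⟨s₀, hs₀, hcut⟩ := hF.exists_two_sided_cut hFc hp hab hFab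
    have hmp : 0 ≤ (m : ℝ) * p := by positivity
    have hsub : Set.Icc s₀ (s₀ + m * p) ⊆ Set.Icc a b :=
      Set.Icc_subset_Icc hs₀.1 (by linarith [hs₀.2])
    obtain ⟨s, t, hs0, ht0, hst, hnest⟩ := ih (hF.subset hsub (convex_Icc _ _))
      (hFc.mono hsub) (by ring) (by linarith)
    refine ⟨fun | 0 => a | i + 1 => s i, fun | 0 => b | i + 1 => t i, rfl, rfl, hst, ?_⟩
    rintro (_ | i) hi
    · simp only [hs0, ht0]
      refine ⟨le_rfl, hs₀.1, by linarith, by linarith [hs₀.2], le_rfl, by linarith, by linarith⟩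
    · obtain ⟨h₁, h₂, h₃, h₄, h₅, hlen, hval⟩ := hnest i (by omega)
      exact ⟨hs₀.1.trans (hs0 ▸ h₁), h₂, h₃, h₄, h₅.trans (by linarith [hs₀.2]), hlen, hval⟩

end Cuts

section Layout

variable {P : ℕ → ℝ} {j n : ℕ} {x y z : ℝ}

/-- For monotone `P`, the length of `[P j, P (j + 1)] ∩ (-∞, x]`. -/
def cover (P : ℕ → ℝ) (j : ℕ) (x : ℝ) : ℝ := min x (P (j + 1)) - min x (P j)

theorem sum_range_cover (P : ℕ → ℝ) (n : ℕ) (x : ℝ) :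
    ∑ j ∈ range n, cover P j x = min x (P n) - min x (P 0) :=
  sum_range_sub (fun j => min x (P j)) n

theorem sum_range_cover_sub_cover (P : ℕ → ℝ) (n : ℕ) (hx : P 0 ≤ x) (hxy : x ≤ y)
    (hy : y ≤ P n) : ∑ j ∈ range n, (cover P j y - cover P j x) = y - x := by
  rw [sum_sub_distrib, sum_range_cover, sum_range_cover, min_eq_left hy,
    min_eq_left (hxy.trans hy), min_eq_right hx, min_eq_right (hx.trans hxy)]
  ring

theorem continuous_cover (P : ℕ → ℝ) (j : ℕ) : Continuous (cover P j) := by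
  unfold cover; fun_prop

variable (hP : Monotone P)
include hP

theorem cover_of_le (h : x ≤ P j) : cover P j x = 0 := by
  rw [cover, min_eq_left h, min_eq_left (h.trans (hP j.le_succ)), sub_self]

theorem cover_of_ge (h : P (j + 1) ≤ x) : cover P j x = P (j + 1) - P j := by
  rw [cover, min_eq_right h, min_eq_right ((hP j.le_succ).trans h)]

theorem cover_left : cover P j (P 0) = 0 :=
  cover_of_le hP (hP j.zero_le)

theorem cover_right (hj : j < n) : cover P j (P n) = P (j + 1) - P j :=
  cover_of_ge hP (hP hj)

theorem cover_mono : Monotone (cover P j) := by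
  intro x y hxy
  have := hP j.le_succ
  simp only [cover, min_def]
  split_ifs <;> linarith

theorem cover_nonneg : 0 ≤ cover P j x := by
  rcases le_total x (P j) with h | h
  · rw [cover_of_le hP h]
  · exact (cover_of_le hP le_rfl).symm.le.trans (cover_mono hP h)

theorem cover_le : cover P j x ≤ P (j + 1) - P j := by
  rcases le_total x (P (j + 1)) with h | h
  · exact (cover_mono hP h).trans (cover_of_ge hP le_rfl).le
  · rw [cover_of_ge hP h]

theorem cover_eq_zero_or_eq (hx : x ∉ Set.Ioo (P j) (P (j + 1))) :
    cover P j x = 0 ∨ cover P j x = P (j + 1) - P j := by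
  rw [Set.mem_Ioo, not_and_or, not_lt, not_lt] at hx
  exact hx.imp (cover_of_le hP) (cover_of_ge hP)

theorem eq_of_mem_Ioo {j' : ℕ} (hj : x ∈ Set.Ioo (P j) (P (j + 1)))
    (hj' : x ∈ Set.Ioo (P j') (P (j' + 1))) : j = j' := by
  by_contra hne
  rcases Nat.lt_or_gt_of_ne hne with h | h
  · exact (hj'.1.trans hj.2).not_ge (hP h)
  · exact (hj.1.trans hj'.2).not_ge (hP h)

theorem card_filter_mem_Ioo_le_one (s : Finset ℕ) (x : ℝ) :
    #{j ∈ s | x ∈ Set.Ioo (P j) (P (j + 1))} ≤ 1 :=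
  card_le_one.2 fun _ hj _ hj' => eq_of_mem_Ioo hP (mem_filter.1 hj).2 (mem_filter.1 hj').2

theorem mul_cover_sub_cover_le {ρ : ℕ → ℝ} (hρ : AntitoneOn ρ (Set.Iio n)) {i : ℕ}
    (hj : j < n) (hxy : x ≤ y) (hyz : y ≤ z) :
    ρ j * (cover P j z - cover P j y) * (cover P i y - cover P i x) ≤
      ρ i * (cover P i y - cover P i x) * (cover P j z - cover P j y) := by
  by_cases hi : P i < y
  · by_cases hj' : y < P (j + 1)
    · have hij : i ≤ j := by
        by_contra h
        exact (hi.trans hj').not_ge (hP (not_le.1 h))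
      have hρij : ρ j ≤ ρ i := hρ (hij.trans_lt hj) hj hij
      have := mul_le_mul_of_nonneg_right hρij <| mul_nonneg
        (sub_nonneg.2 (cover_mono hP (j := i) hxy)) (sub_nonneg.2 (cover_mono hP (j := j) hyz))
      linarith
    · rw [cover_of_ge hP (not_lt.1 hj'), cover_of_ge hP ((not_lt.1 hj').trans hyz)]
      simp
  · rw [cover_of_le hP (not_lt.1 hi), cover_of_le hP (hxy.trans (not_lt.1 hi))]
    simp

theorem concaveOn_sum_mul_cover {ρ : ℕ → ℝ} (hρ : AntitoneOn ρ (Set.Iio n)) :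
    ConcaveOn ℝ (Set.Icc (P 0) (P n)) (fun x => ∑ j ∈ range n, ρ j * cover P j x) := by
  refine concaveOn_of_slope_anti_adjacent (convex_Icc _ _) fun {x y z} hx hz hxy hyz => ?_
  have hyx := sum_range_cover_sub_cover P n hx.1 hxy.le (hyz.le.trans hz.2)
  have hzy := sum_range_cover_sub_cover P n (hx.1.trans hxy.le) hyz.le hz.2
  simp only [← sum_sub_distrib, ← mul_sub]
  rw [div_le_div_iff₀ (sub_pos.2 hyz) (sub_pos.2 hxy), ← hyx, ← hzy, sum_mul_sum, sum_mul_sum,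
    sum_comm]
  refine sum_le_sum fun i _ => sum_le_sum fun j hj => ?_
  exact mul_cover_sub_cover_le hP hρ (mem_range.1 hj) hxy.le hyz.le

end Layout

section Share

variable {P : ℕ → ℝ} {a b c d : ℝ} {j : ℕ}

noncomputable def share (P : ℕ → ℝ) (a b c d : ℝ) (j : ℕ) : ℝ :=
  ((cover P j b - cover P j a) + (cover P j d - cover P j c)) / (P (j + 1) - P j)

variable (hP : Monotone P)
include hP

theorem share_mul_sub : share P a b c d j * (P (j + 1) - P j) =
    (cover P j b - cover P j a) + (cover P j d - cover P j c) := by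
  rcases (hP j.le_succ).eq_or_lt with h | h
  · simp [cover, h]
  · exact div_mul_cancel₀ _ (sub_pos.2 h).ne'

theorem sum_range_nested_share_mul_sub (s t : ℕ → ℝ) (k : ℕ) (hst : s k = t k) :
    ∑ i ∈ range k, share P (s i) (s (i + 1)) (t (i + 1)) (t i) j * (P (j + 1) - P j) =
      cover P j (t 0) - cover P j (s 0) := by
  simp only [share_mul_sub hP, sum_add_distrib, sum_range_sub (fun i => cover P j (s i)),
    sum_range_sub' (fun i => cover P j (t i)), hst]
  ring

theorem sum_range_mul_share_mul_sub (ρ : ℕ → ℝ) (n : ℕ) :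
    ∑ j ∈ range n, ρ j * (share P a b c d j * (P (j + 1) - P j)) =
      ((∑ j ∈ range n, ρ j * cover P j b) - ∑ j ∈ range n, ρ j * cover P j a) +
        ((∑ j ∈ range n, ρ j * cover P j d) - ∑ j ∈ range n, ρ j * cover P j c) := by
  simp only [share_mul_sub hP, mul_add, mul_sub, sum_add_distrib, sum_sub_distrib]

variable (hab : a ≤ b) (hbc : b ≤ c) (hcd : c ≤ d)
include hab hbc hcd

theorem share_mem_Icc : share P a b c d j ∈ Set.Icc 0 1 := by
  have hmono := cover_mono hP (j := j)
  have hlen := sub_nonneg.2 (hP j.le_succ)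
  refine ⟨div_nonneg ?_ hlen, div_le_one_of_le₀ ?_ hlen⟩
  · linarith [hmono hab, hmono hcd]
  · linarith [hmono hbc, cover_nonneg hP (j := j) (x := a), cover_le hP (j := j) (x := d)]

theorem exists_mem_Ioo_of_share (h : 0 < share P a b c d j ∧ share P a b c d j < 1) :
    ∃ x ∈ ({a, b, c, d} : Finset ℝ), x ∈ Set.Ioo (P j) (P (j + 1)) := by
  have hL : 0 < P (j + 1) - P j := by
    by_contra hL
    have hL0 : P (j + 1) - P j = 0 := le_antisymm (not_lt.1 hL) (sub_nonneg.2 (hP j.le_succ))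
    rw [share, hL0, div_zero] at h
    exact h.1.ne rfl
  rw [share, div_pos_iff_of_pos_right hL, div_lt_one hL] at h
  by_contra hnot
  simp only [mem_insert, mem_singleton, exists_eq_or_imp, exists_eq_left, not_or] at hnot
  obtain ⟨ha, hb, hc, hd⟩ := hnot
  have hmono := cover_mono hP (j := j)
  have := hmono hab
  have := hmono hbc
  have := hmono hcd
  -- each cover is `0` or the whole length, so `[a, b] ∪ [c, d]` meets none or all of item `j`
  rcases cover_eq_zero_or_eq hP ha with h₁ | h₁ <;>
    rcases cover_eq_zero_or_eq hP hb with h₂ | h₂ <;>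
    rcases cover_eq_zero_or_eq hP hc with h₃ | h₃ <;>
    rcases cover_eq_zero_or_eq hP hd with h₄ | h₄ <;>
    linarith

theorem card_filter_share_le_four (s : Finset ℕ) :
    #{j ∈ s | 0 < share P a b c d j ∧ share P a b c d j < 1} ≤ 4 :=
  calc #{j ∈ s | 0 < share P a b c d j ∧ share P a b c d j < 1}
      ≤ #(({a, b, c, d} : Finset ℝ).biUnion
          fun x => {j ∈ s | x ∈ Set.Ioo (P j) (P (j + 1))}) := by
        refine card_le_card fun j hj => ?_
        obtain ⟨hjs, hj⟩ := mem_filter.1 hj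
        obtain ⟨x, hx, hxj⟩ := exists_mem_Ioo_of_share hP hab hbc hcd hj
        exact mem_biUnion.2 ⟨x, hx, mem_filter.2 ⟨hjs, hxj⟩⟩
    _ ≤ ∑ x ∈ ({a, b, c, d} : Finset ℝ), 1 :=
        card_biUnion_le.trans (sum_le_sum fun x _ => card_filter_mem_Ioo_le_one hP s x)
    _ ≤ 4 := by
        rw [← card_eq_sum_ones]
        exact card_le_four

theorem sum_range_share_mul_sub {n : ℕ} (ha : P 0 ≤ a) (hd : d ≤ P n) :
    ∑ j ∈ range n, share P a b c d j * (P (j + 1) - P j) = (b - a) + (d - c) := by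
  have h := sum_range_mul_share_mul_sub hP (a := a) (b := b) (c := c) (d := d) (fun _ => 1) n
  simp only [one_mul] at h
  rw [h, ← sum_sub_distrib, ← sum_sub_distrib,
    sum_range_cover_sub_cover P n ha hab (hbc.trans (hcd.trans hd)),
    sum_range_cover_sub_cover P n ((ha.trans hab).trans hbc) hcd hd]

end Share

section PartialSums

variable {c : ℕ → ℝ} {n : ℕ}

theorem monotone_sum_range_min (hc : ∀ j < n, 0 ≤ c j) :
    Monotone fun m => ∑ i ∈ range (min m n), c i :=
  fun _ _ h => sum_le_sum_of_subset_of_nonneg (range_subset_range.2 (min_le_min_right n h))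
    fun i hi _ => hc i ((mem_range.1 hi).trans_le (min_le_right _ _))

theorem sum_range_min_succ_sub {j : ℕ} (hj : j < n) :
    ∑ i ∈ range (min (j + 1) n), c i - ∑ i ∈ range (min j n), c i = c j := by
  rw [min_eq_left (Nat.succ_le_of_lt hj), min_eq_left hj.le, sum_range_succ, add_sub_cancel_left]

end PartialSums

structure IsBalancedFractionalPartition {ι : Type*} (T : Finset ι) (c v : ι → ℝ) (k : ℕ)
    (y : Fin k → ι → ℝ) : Prop where
  mem_Icc : ∀ i j, 0 ≤ y i j ∧ y i j ≤ 1
  sum_eq_one : ∀ j ∈ T, ∑ i, y i j = 1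
  cost_eq : ∀ i, ∑ j ∈ T, y i j * c j = (∑ j ∈ T, c j) / k
  value_eq : ∀ i, ∑ j ∈ T, y i j * v j = (∑ j ∈ T, v j) / k
  card_fractional_le : ∀ i, (T.filter (fun j => 0 < y i j ∧ y i j < 1)).card ≤ 4

theorem exists_isBalancedFractionalPartition_range (n k : ℕ) (c v : ℕ → ℝ)
    (hc : ∀ j < n, 0 < c j) (hρ : AntitoneOn (fun j => v j / c j) (Set.Iio n)) (hk : 1 ≤ k) :
    ∃ y, IsBalancedFractionalPartition (range n) c v k y := by
  -- `min m n` freezes `P` after the last item, which makes it monotone.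
  set P : ℕ → ℝ := fun m => ∑ i ∈ range (min m n), c i with hPdef
  have hP : Monotone P := monotone_sum_range_min fun j hj => (hc j hj).le
  have hPc : ∀ j < n, P (j + 1) - P j = c j := fun j hj => sum_range_min_succ_sub hj
  have hP0 : P 0 = 0 := by simp [hPdef]
  have hPn : P n = ∑ j ∈ range n, c j := by simp [hPdef]
  have hk₀ : (0 : ℝ) < k := by exact_mod_cast hk
  set F : ℝ → ℝ := fun x => ∑ j ∈ range n, v j / c j * cover P j x
  have hF : F (P n) - F (P 0) = k * ((∑ j ∈ range n, v j) / k) := by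
    rw [mul_div_cancel₀ _ hk₀.ne', ← sum_sub_distrib]
    refine sum_congr rfl fun j hj => ?_
    have hj := mem_range.1 hj
    rw [cover_right hP hj, cover_left hP, hPc j hj, mul_zero, sub_zero,
      div_mul_cancel₀ _ (hc j hj).ne']
  obtain ⟨s, t, hs0, ht0, hst, hcut⟩ := (concaveOn_sum_mul_cover hP hρ).exists_nested_cuts
    ((continuous_finsetSum _ fun j _ => continuous_const.mul (continuous_cover P j)).continuousOn)
    (div_nonneg (hP0 ▸ hP n.zero_le) hk₀.le) k
    (by rw [hP0, sub_zero, mul_div_cancel₀ _ hk₀.ne']) hF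
  refine ⟨fun i j => share P (s i) (s (i + 1)) (t (i + 1)) (t i) j,
    ⟨fun i j => ?_, fun j hj => ?_, fun i => ?_, fun i => ?_, fun i => ?_⟩⟩
  · obtain ⟨-, h₂, h₃, h₄, -⟩ := hcut i i.2
    exact share_mem_Icc hP h₂ h₃ h₄
  · have hj := mem_range.1 hj
    apply mul_right_cancel₀ (hc j hj).ne'
    rw [one_mul, ← hPc j hj, sum_mul,
      Fin.sum_univ_eq_sum_range (fun i => share P (s i) (s (i + 1)) (t (i + 1)) (t i) j * _) k,
      sum_range_nested_share_mul_sub hP s t k hst, hs0, ht0, cover_right hP hj, cover_left hP,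
      sub_zero]
  · obtain ⟨h₁, h₂, h₃, h₄, h₅, hlen, -⟩ := hcut i i.2
    rw [← hPn, ← hlen, ← sum_range_share_mul_sub hP h₂ h₃ h₄ h₁ h₅]
    exact sum_congr rfl fun j hj => by rw [hPc j (mem_range.1 hj)]
  · obtain ⟨-, -, -, -, -, -, hval⟩ := hcut i i.2
    calc ∑ j ∈ range n, share P (s i) (s (i + 1)) (t (i + 1)) (t i) j * v j
        = ∑ j ∈ range n, v j / c j *
            (share P (s i) (s (i + 1)) (t (i + 1)) (t i) j * (P (j + 1) - P j)) :=
          sum_congr rfl fun j hj => by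
            rw [hPc j (mem_range.1 hj)]
            field_simp [(hc j (mem_range.1 hj)).ne']
      _ = (∑ j ∈ range n, v j) / k := (sum_range_mul_share_mul_sub hP _ n).trans hval
  · obtain ⟨-, h₂, h₃, h₄, -⟩ := hcut i i.2
    exact card_filter_share_le_four hP h₂ h₃ h₄ (range n)

theorem Finset.exists_bijOn_antitoneOn {ι α : Type*} [Nonempty ι] [LinearOrder α] (T : Finset ι)
    (f : ι → α) : ∃ g : ℕ → ι, Set.BijOn g (Set.Iio #T) T ∧ AntitoneOn (f ∘ g) (Set.Iio #T) := by
  let e : Fin #T ≃ T := T.equivFin.symm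
  let σ : Fin #T ≃ T := (Tuple.sort fun a => OrderDual.toDual (f (e a))).trans e
  have hσ : Antitone fun a => f (σ a) := Tuple.monotone_sort fun a => OrderDual.toDual (f (e a))
  refine ⟨fun m => if h : m < #T then σ ⟨m, h⟩ else Classical.arbitrary ι,
    ⟨fun m hm => ?_, fun m hm m' hm' h => ?_, fun j hj => ?_⟩, fun m hm m' hm' h => ?_⟩
  · simp [dif_pos (Set.mem_Iio.1 hm)]
  · simpa [dif_pos (Set.mem_Iio.1 hm), dif_pos (Set.mem_Iio.1 hm')] using h
  · exact ⟨σ.symm ⟨j, hj⟩, (σ.symm _).2, by simp⟩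
  · simpa [dif_pos (Set.mem_Iio.1 hm), dif_pos (Set.mem_Iio.1 hm')] using hσ (Fin.mk_le_mk.2 h)

theorem IsBalancedFractionalPartition.of_bijOn {ι : Type*} {T : Finset ι} {c v : ι → ℝ}
    {k n : ℕ} {g : ℕ → ι} (hg : Set.BijOn g (Set.Iio n) T) {y : Fin k → ℕ → ℝ}
    (hy : IsBalancedFractionalPartition (range n) (c ∘ g) (v ∘ g) k y) :
    IsBalancedFractionalPartition T c v k fun i j => y i (Function.invFunOn g (Set.Iio n) j) := by
  have hsum {M : Type} [AddCommMonoid M] (F : ι → M) :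
      ∑ j ∈ T, F j = ∑ m ∈ range n, F (g m) := by
    rw [← coe_range] at hg
    exact (sum_nbij g (fun m hm => hg.mapsTo hm) hg.injOn hg.surjOn fun _ _ => rfl).symm
  have hinv {m : ℕ} (hm : m ∈ range n) : Function.invFunOn g (Set.Iio n) (g m) = m :=
    hg.injOn.leftInvOn_invFunOn (mem_range.1 hm)
  refine ⟨fun i j => hy.mem_Icc i _, fun j hj => ?_, fun i => ?_, fun i => ?_, fun i => ?_⟩
  · obtain ⟨m, hm, rfl⟩ := hg.surjOn hj
    rw [hinv (mem_range.2 hm)]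
    exact hy.sum_eq_one m (mem_range.2 hm)
  · rw [hsum, hsum]
    exact (sum_congr rfl fun m hm => by rw [hinv hm, Function.comp_apply]).trans (hy.cost_eq i)
  · rw [hsum, hsum]
    exact (sum_congr rfl fun m hm => by rw [hinv hm, Function.comp_apply]).trans (hy.value_eq i)
  · refine le_trans (le_of_eq ?_) (hy.card_fractional_le i)
    rw [card_filter, card_filter, hsum]
    exact sum_congr rfl fun m hm => by rw [hinv hm]

theorem fractional_even_partition_general {ι : Type*}
    (T : Finset ι) (v c : ι → ℝ)
    (hc : ∀ j ∈ T, 0 < c j)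
    (k : ℕ) (hk : 1 ≤ k) :
    ∃ y : Fin k → ι → ℝ,
      (∀ i j, 0 ≤ y i j ∧ y i j ≤ 1) ∧
      (∀ j ∈ T, ∑ i, y i j = 1) ∧
      (∀ i, ∑ j ∈ T, y i j * c j = (∑ j ∈ T, c j) / k) ∧
      (∀ i, ∑ j ∈ T, y i j * v j = (∑ j ∈ T, v j) / k) ∧
      (∀ i, (T.filter (fun j => 0 < y i j ∧ y i j < 1)).card ≤ 4) := by
  rcases isEmpty_or_nonempty ι with hι | hι
  · exact ⟨0, by simp [T.eq_empty_of_isEmpty]⟩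
  obtain ⟨g, hg, hsorted⟩ := T.exists_bijOn_antitoneOn fun j => v j / c j
  obtain ⟨y, hy⟩ := exists_isBalancedFractionalPartition_range #T k (c ∘ g) (v ∘ g)
    (fun m hm => hc _ (hg.mapsTo hm)) hsorted hk
  obtain ⟨h₁, h₂, h₃, h₄, h₅⟩ := hy.of_bijOn hg
  exact ⟨_, h₁, h₂, h₃, h₄, h₅⟩

/-- Any finite set `T` of items with nonnegative values and positive costs admits a
fractional partition into `k` parts of equal total cost `c(T)/k` and equal total
value `v(T)/k`, with at most `4` fractionally-assigned items per part. -/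
theorem fractional_even_partition {ι : Type*} [DecidableEq ι]
    (T : Finset ι) (v c : ι → ℝ)
    (hv : ∀ j ∈ T, 0 ≤ v j) (hc : ∀ j ∈ T, 0 < c j)
    (k : ℕ) (hk : 1 ≤ k) :
    ∃ y : Fin k → ι → ℝ,
      (∀ i j, 0 ≤ y i j ∧ y i j ≤ 1) ∧
      (∀ j ∈ T, ∑ i, y i j = 1) ∧
      (∀ i, ∑ j ∈ T, y i j * c j = (∑ j ∈ T, c j) / k) ∧
      (∀ i, ∑ j ∈ T, y i j * v j = (∑ j ∈ T, v j) / k) ∧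
      (∀ i, (T.filter (fun j => 0 < y i j ∧ y i j < 1)).card ≤ 4) :=
  fractional_even_partition_general T v c hc k hk
end
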